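/- arXiv:2406.04010 — 8 statements merged into one kernel-verified Lean document; each statement's English description precedes it below -/
import Mathlib

section
/- Let T = (t_{ijkl}) be a 4th-order 2-dimensional symmetric tensor with real entries satisfying t_{1111} = t_{2222} = 1, |t_{1112}| = |t_{1222}| = |t_{1122}| = 1. Then T is positive semidefinite if and only if t_{1122} = 1. -/
/-! Adding the values at `(1, 1)` and `(1, -1)` cancels the odd coefficients and leaves
`2 (t1111 + 6 t1122 + t2222)`, which is `-8` when `t1122 = -1`. Conversely, for `t1122 = 1`
the form is `(x1 + a x2)^4` when `t1112 = t1222 = a`, and the sum of squares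
`(x1^2 + 2 a x1 x2 - x2^2)^2 + (2 x1 x2)^2` when `t1222 = -t1112 = -a`. -/

def binaryQuartic (t1111 t1112 t1122 t1222 t2222 x1 x2 : ℝ) : ℝ :=
  t1111 * x1^4 + 4 * t1112 * x1^3 * x2 + 6 * t1122 * x1^2 * x2^2
    + 4 * t1222 * x1 * x2^3 + t2222 * x2^4

theorem binaryQuartic_one_one_add_one_neg_one (t1111 t1112 t1122 t1222 t2222 : ℝ) :
    binaryQuartic t1111 t1112 t1122 t1222 t2222 1 1
      + binaryQuartic t1111 t1112 t1122 t1222 t2222 1 (-1)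
      = 2 * (t1111 + 6 * t1122 + t2222) := by
  unfold binaryQuartic
  ring

theorem neg_add_le_six_mul_of_binaryQuartic_nonneg {t1111 t1112 t1122 t1222 t2222 : ℝ}
    (h : ∀ x1 x2, 0 ≤ binaryQuartic t1111 t1112 t1122 t1222 t2222 x1 x2) :
    -(t1111 + t2222) ≤ 6 * t1122 := by
  linarith [h 1 1, h 1 (-1), binaryQuartic_one_one_add_one_neg_one t1111 t1112 t1122 t1222 t2222]

theorem binaryQuartic_eq_pow_four {a : ℝ} (ha : a ^ 2 = 1) (x1 x2 : ℝ) :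
    binaryQuartic 1 a 1 a 1 x1 x2 = (x1 + a * x2) ^ 4 := by
  unfold binaryQuartic
  linear_combination (-(6 * x1 ^ 2 * x2 ^ 2) - 4 * a * x1 * x2 ^ 3 - (a ^ 2 + 1) * x2 ^ 4) * ha

theorem binaryQuartic_eq_sq_add_sq {a : ℝ} (ha : a ^ 2 = 1) (x1 x2 : ℝ) :
    binaryQuartic 1 a 1 (-a) 1 x1 x2 = (x1 ^ 2 + 2 * a * x1 * x2 - x2 ^ 2) ^ 2 + (2 * x1 * x2) ^ 2 := by
  unfold binaryQuartic
  linear_combination (-4 * x1 ^ 2 * x2 ^ 2) * ha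

theorem binaryQuartic_nonneg {a b : ℝ} (ha : |a| = 1) (hb : |b| = 1) (x1 x2 : ℝ) :
    0 ≤ binaryQuartic 1 a 1 b 1 x1 x2 := by
  have ha2 : a ^ 2 = 1 := by rw [← sq_abs, ha, one_pow]
  rcases abs_eq_abs.mp (hb.trans ha.symm) with rfl | rfl
  · rw [binaryQuartic_eq_pow_four ha2]
    positivity
  · rw [binaryQuartic_eq_sq_add_sq ha2]
    positivity

/-- **Lemma 2.2(i).** A 4th-order 2-dimensional symmetric tensor with
`t1111 = t2222 = 1` and `|t1112| = |t1222| = |t1122| = 1` is positive semidefinite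
if and only if `t1122 = 1`. -/
theorem stmt_2 (t1111 t1112 t1122 t1222 t2222 : ℝ)
    (h1111 : t1111 = 1) (h2222 : t2222 = 1)
    (h1112 : |t1112| = 1) (h1222 : |t1222| = 1) (h1122 : |t1122| = 1) :
    (∀ x1 x2 : ℝ,
      0 ≤ t1111 * x1^4 + 4 * t1112 * x1^3 * x2 + 6 * t1122 * x1^2 * x2^2
        + 4 * t1222 * x1 * x2^3 + t2222 * x2^4) ↔ t1122 = 1 := by
  subst h1111 h2222
  constructor
  · intro h
    have := neg_add_le_six_mul_of_binaryQuartic_nonneg h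
    rcases abs_eq zero_le_one |>.mp h1122 with hc | hc
    · exact hc
    · linarith
  · rintro rfl
    exact binaryQuartic_nonneg h1112 h1222
end

section
/- Let T = (t_{ijkl}) be a 4th-order 2-dimensional symmetric tensor with real entries satisfying t_{1111} = t_{2222} = 1, |t_{1112}| = |t_{1222}| = |t_{1122}| = 1. Then T is positive definite if and only if t_{1122} = 1 and t_{1112}·t_{1222} = -1. -/
/-! With `t1122 = 1` and `t1222 = -t1112 = -a`, the form is the sum of squares
`(x1^2 + 2 a x1 x2 - x2^2)^2 + (8 - 4 a^2) x1^2 x2^2`, positive definite as `a^2 = 1 < 2`.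
Conversely, positive definiteness at `(1, 1)` and `(1, -1)` gives `2 ± 4 (t1112 + t1222) + 6 t1122 > 0`,
which forces `t1122 = 1` and `|t1112 + t1222| < 2`, i.e. `t1112` and `t1222` have opposite signs. -/

lemma quartic_pos_of_sq_lt_two {a : ℝ} (ha : a ^ 2 < 2) {x y : ℝ} (hxy : (x, y) ≠ (0, 0)) :
    0 < x ^ 4 + 4 * a * x ^ 3 * y + 6 * x ^ 2 * y ^ 2 - 4 * a * x * y ^ 3 + y ^ 4 := by
  have hsos : x ^ 4 + 4 * a * x ^ 3 * y + 6 * x ^ 2 * y ^ 2 - 4 * a * x * y ^ 3 + y ^ 4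
      = (x ^ 2 + 2 * a * x * y - y ^ 2) ^ 2 + (8 - 4 * a ^ 2) * (x * y) ^ 2 := by ring
  rw [hsos]
  rcases eq_or_ne (x * y) 0 with hprod | hprod
  · have hsq : x ^ 2 + 2 * a * x * y - y ^ 2 ≠ 0 := by
      rcases mul_eq_zero.mp hprod with rfl | rfl
      · have : y ≠ 0 := by rintro rfl; exact hxy rfl
        simpa
      · have : x ≠ 0 := by rintro rfl; exact hxy rfl
        simpa
    rw [hprod, zero_pow two_ne_zero, mul_zero, add_zero]
    positivity
  · have : 0 < (8 - 4 * a ^ 2) * (x * y) ^ 2 := by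
      apply mul_pos <;> [linarith; positivity]
    positivity

lemma mul_eq_neg_one_of_abs_add_lt_two {a b : ℝ} (ha : |a| = 1) (hb : |b| = 1)
    (hab : |a + b| < 2) : a * b = -1 := by
  have hmul : |a * b| = 1 := by rw [abs_mul, ha, hb, one_mul]
  rcases (abs_eq zero_le_one).mp hmul with h | h
  · have hsq : (a + b) ^ 2 = 4 := by nlinarith [sq_abs a, sq_abs b]
    nlinarith [sq_abs (a + b), abs_nonneg (a + b)]
  · exact h

/-- **Lemma 2.2(ii).** A 4th-order 2-dimensional symmetric tensor with
`t1111 = t2222 = 1` and `|t1112| = |t1222| = |t1122| = 1` is positive definite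
if and only if `t1122 = 1` and `t1112 * t1222 = -1`. -/
theorem stmt_3 (t1111 t1112 t1122 t1222 t2222 : ℝ)
    (h1111 : t1111 = 1) (h2222 : t2222 = 1)
    (h1112 : |t1112| = 1) (h1222 : |t1222| = 1) (h1122 : |t1122| = 1) :
    (∀ x1 x2 : ℝ, (x1, x2) ≠ (0, 0) →
      0 < t1111 * x1^4 + 4 * t1112 * x1^3 * x2 + 6 * t1122 * x1^2 * x2^2
        + 4 * t1222 * x1 * x2^3 + t2222 * x2^4) ↔
    (t1122 = 1 ∧ t1112 * t1222 = -1) := by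
  subst h1111 h2222
  constructor
  · intro hpos
    have hdiag := hpos 1 1 (by simp)
    have hanti := hpos 1 (-1) (by simp)
    norm_num at hdiag hanti
    have hc : t1122 = 1 := by
      rcases (abs_eq zero_le_one).mp h1122 with h | h
      · exact h
      · linarith
    subst hc
    exact ⟨rfl, mul_eq_neg_one_of_abs_add_lt_two h1112 h1222
      (abs_lt.mpr ⟨by linarith, by linarith⟩)⟩
  · rintro ⟨rfl, hab⟩ x1 x2 hx
    have hsq : t1112 ^ 2 = 1 := by rw [← sq_abs, h1112, one_pow]
    have hb : t1222 = -t1112 := by linear_combination (-t1222) * hsq + t1112 * hab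
    subst hb
    have := quartic_pos_of_sq_lt_two (hsq.trans_lt one_lt_two) hx
    linarith
end

section
/- Let T = (t_{ijkl}) be a 4th-order 3-dimensional symmetric tensor with real entries satisfying t_{iiii} = 1 for all i, |t_{iiij}| = 1 and t_{iiij}·t_{ijjj} = -1 for all i ≠ j, |t_{1123}| = |t_{1223}| = |t_{1233}| = 1, and moreover t_{iijj} ≥ 8/3 for all i ≠ j. Then T is positive definite. -/
/-!
Since `t_iiij * t_ijjj = -1` and `|t_iiij| = 1`, the two cubic terms in `x_i, x_j` combine
to `4 t_iiij x_i x_j (x_i^2 - x_j^2)`. Bounding every coefficient of modulus one by its worst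
sign and every `t_iijj` by `8/3` bounds the form below by the symmetric quartic
`minorantQuartic`, which depends only on `|x_1|, |x_2|, |x_3|`. On the ordered cone `a ≥ b ≥ c ≥ 0`, with
`u = a - b` and `v = b - c`, this quartic is a square plus a polynomial with nonnegative
coefficients in `u, v, c`, and it vanishes only at the origin.
-/

lemma eq_neg_of_abs_eq_one_of_mul_eq_neg_one {s t : ℝ} (hs : |s| = 1) (h : s * t = -1) :
    t = -s := by
  have hss : s * s = 1 := by rw [← abs_mul_abs_self, hs, one_mul]
  linear_combination s * h - t * hss

lemma neg_abs_le_mul_of_abs_le_one {t : ℝ} (ht : |t| ≤ 1) (y : ℝ) : -|y| ≤ t * y := by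
  have hty : |t * y| ≤ |y| := by
    rw [abs_mul]
    exact mul_le_of_le_one_left (abs_nonneg y) ht
  linarith [neg_abs_le (t * y)]

lemma sq_add_nonneg_poly_pos {u v c : ℝ} (hu : 0 ≤ u) (hv : 0 ≤ v) (hc : 0 ≤ c)
    (h : 0 < u + v + c) :
    0 < (u^2 - 2*u*c - 2*v*c - c^2)^2
        + 14*c^4 + 20*v*c^3 + 28*v^2*c^2 + 40*v^3*c + 18*v^4
        + 36*u*v^2*c + 28*u*v^3 + 10*u^2*v^2 := by
  rcases hc.eq_or_lt with rfl | hc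
  · nlinarith [pow_pos h 4, sq_nonneg (3*u^2 - 2*u*v), pow_nonneg hv 4,
      mul_nonneg (mul_nonneg hu hv) (pow_nonneg hv 2),
      mul_nonneg (pow_nonneg hu 2) (pow_nonneg hv 2)]
  · have hrest : 0 ≤ 20*v*c^3 + 28*v^2*c^2 + 40*v^3*c + 18*v^4
        + 36*u*v^2*c + 28*u*v^3 + 10*u^2*v^2 := by positivity
    nlinarith [pow_pos hc 4, sq_nonneg (u^2 - 2*u*c - 2*v*c - c^2)]

def minorantQuartic (a b c : ℝ) : ℝ :=
  a^4 + b^4 + c^4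
    - 4 * (|a * b * (a^2 - b^2)| + |a * c * (a^2 - c^2)| + |b * c * (b^2 - c^2)|)
    + 16 * (a^2 * b^2 + a^2 * c^2 + b^2 * c^2)
    - 12 * (|a^2 * b * c| + |a * b^2 * c| + |a * b * c^2|)

namespace minorantQuartic

lemma abs_args (a b c : ℝ) : minorantQuartic |a| |b| |c| = minorantQuartic a b c := by
  simp only [minorantQuartic, abs_mul, abs_abs, abs_pow, sq_abs, (by decide : Even 4).pow_abs]

lemma swap_left (a b c : ℝ) : minorantQuartic b a c = minorantQuartic a b c := by
  simp only [minorantQuartic, abs_mul, abs_sub_comm (b^2) (a^2)]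
  ring

lemma swap_right (a b c : ℝ) : minorantQuartic a c b = minorantQuartic a b c := by
  simp only [minorantQuartic, abs_mul, abs_sub_comm (c^2) (b^2)]
  ring

lemma pos_of_le {a b c : ℝ} (hc : 0 ≤ c) (hcb : c ≤ b) (hba : b ≤ a) (ha : 0 < a) :
    0 < minorantQuartic a b c := by
  have hb : 0 ≤ b := hc.trans hcb
  have hab : |a^2 - b^2| = a^2 - b^2 := abs_of_nonneg (by nlinarith)
  have hac : |a^2 - c^2| = a^2 - c^2 := abs_of_nonneg (by nlinarith)
  have hbc : |b^2 - c^2| = b^2 - c^2 := abs_of_nonneg (by nlinarith)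
  have hsos : minorantQuartic a b c
      = ((a-b)^2 - 2*(a-b)*c - 2*(b-c)*c - c^2)^2
        + 14*c^4 + 20*(b-c)*c^3 + 28*(b-c)^2*c^2 + 40*(b-c)^3*c + 18*(b-c)^4
        + 36*(a-b)*(b-c)^2*c + 28*(a-b)*(b-c)^3 + 10*(a-b)^2*(b-c)^2 := by
    simp only [minorantQuartic, abs_mul, abs_pow, abs_of_nonneg ha.le, abs_of_nonneg hb,
      abs_of_nonneg hc, hab, hac, hbc]
    ring
  rw [hsos]
  exact sq_add_nonneg_poly_pos (by linarith) (by linarith) hc (by linarith)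

lemma pos_of_nonneg {a b c : ℝ} (ha : 0 ≤ a) (hb : 0 ≤ b) (hc : 0 ≤ c)
    (h : 0 < a + b + c) : 0 < minorantQuartic a b c := by
  wlog hba : b ≤ a generalizing a b c with H
  · rw [← swap_left]
    exact H hb ha hc (by linarith) (by linarith)
  wlog hcb : c ≤ b generalizing a b c with H
  · rcases le_total c a with hca | hac
    · rw [← swap_right]
      exact H ha hc hb (by linarith) hca (by linarith)
    · rw [← swap_right, ← swap_left]
      exact H hc ha hb (by linarith) hac (by linarith)
  exact pos_of_le hc hcb hba (by linarith)

lemma pos {a b c : ℝ} (h : (a, b, c) ≠ (0, 0, 0)) : 0 < minorantQuartic a b c := by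
  have hsum : 0 < |a| + |b| + |c| := by
    simp only [ne_eq, Prod.mk.injEq, not_and_or] at h
    rcases h with h | h | h <;> positivity
  rw [← abs_args]
  exact pos_of_nonneg (abs_nonneg a) (abs_nonneg b) (abs_nonneg c) hsum

end minorantQuartic

theorem stmt_7_general (t1111 t2222 t3333 t1112 t1113 t1222 t2223 t1333 t2333
    t1122 t1133 t2233 t1123 t1223 t1233 : ℝ)
    (h1111 : t1111 = 1) (h2222 : t2222 = 1) (h3333 : t3333 = 1)
    (a1112 : |t1112| = 1) (a1113 : |t1113| = 1) (a2223 : |t2223| = 1)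
    (p12 : t1112 * t1222 = -1) (p13 : t1113 * t1333 = -1) (p23 : t2223 * t2333 = -1)
    (a1123 : |t1123| = 1) (a1223 : |t1223| = 1) (a1233 : |t1233| = 1)
    (d12 : 8/3 ≤ t1122) (d13 : 8/3 ≤ t1133) (d23 : 8/3 ≤ t2233) :
    (∀ x1 x2 x3 : ℝ, (x1, x2, x3) ≠ (0, 0, 0) →
      0 < t1111 * x1^4 + t2222 * x2^4 + t3333 * x3^4
        + 4 * (t1112 * x1^3 * x2 + t1113 * x1^3 * x3 + t1222 * x1 * x2^3
            + t2223 * x2^3 * x3 + t1333 * x1 * x3^3 + t2333 * x2 * x3^3)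
        + 6 * (t1122 * x1^2 * x2^2 + t1133 * x1^2 * x3^2 + t2233 * x2^2 * x3^2)
        + 12 * (t1123 * x1^2 * x2 * x3 + t1223 * x1 * x2^2 * x3 + t1233 * x1 * x2 * x3^2)) := by
  intro x1 x2 x3 hx
  have hF := minorantQuartic.pos hx
  unfold minorantQuartic at hF
  rw [h1111, h2222, h3333, eq_neg_of_abs_eq_one_of_mul_eq_neg_one a1112 p12,
    eq_neg_of_abs_eq_one_of_mul_eq_neg_one a1113 p13,
    eq_neg_of_abs_eq_one_of_mul_eq_neg_one a2223 p23]
  linarith [neg_abs_le_mul_of_abs_le_one a1112.le (x1 * x2 * (x1^2 - x2^2)),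
    neg_abs_le_mul_of_abs_le_one a1113.le (x1 * x3 * (x1^2 - x3^2)),
    neg_abs_le_mul_of_abs_le_one a2223.le (x2 * x3 * (x2^2 - x3^2)),
    neg_abs_le_mul_of_abs_le_one a1123.le (x1^2 * x2 * x3),
    neg_abs_le_mul_of_abs_le_one a1223.le (x1 * x2^2 * x3),
    neg_abs_le_mul_of_abs_le_one a1233.le (x1 * x2 * x3^2),
    mul_le_mul_of_nonneg_right d12 (by positivity : (0 : ℝ) ≤ x1^2 * x2^2),
    mul_le_mul_of_nonneg_right d13 (by positivity : (0 : ℝ) ≤ x1^2 * x3^2),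
    mul_le_mul_of_nonneg_right d23 (by positivity : (0 : ℝ) ≤ x2^2 * x3^2)]

/-- A 4th-order 3-dimensional symmetric tensor `T = (t_ijkl)` is identified with the
quartic form
`Tx^4 = Σ_i t_iiii x_i^4 + 4 Σ_{i≠j} t_iiij x_i^3 x_j + 6 Σ_{i<j} t_iijj x_i^2 x_j^2
  + 12 (t1123 x1^2 x2 x3 + t1223 x1 x2^2 x3 + t1233 x1 x2 x3^2)`.
Hypotheses: `t_iiii = 1`, `|t_iiij| = 1` and `t_iiij * t_ijjj = -1` for `i ≠ j`,
`|t1123| = |t1223| = |t1233| = 1`, and the stated condition on the `t_iijj`. -/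
theorem stmt_7 (t1111 t2222 t3333 t1112 t1113 t1222 t2223 t1333 t2333
    t1122 t1133 t2233 t1123 t1223 t1233 : ℝ)
    (h1111 : t1111 = 1) (h2222 : t2222 = 1) (h3333 : t3333 = 1)
    (a1112 : |t1112| = 1) (a1113 : |t1113| = 1) (a1222 : |t1222| = 1)
    (a2223 : |t2223| = 1) (a1333 : |t1333| = 1) (a2333 : |t2333| = 1)
    (p12 : t1112 * t1222 = -1) (p13 : t1113 * t1333 = -1) (p23 : t2223 * t2333 = -1)
    (a1123 : |t1123| = 1) (a1223 : |t1223| = 1) (a1233 : |t1233| = 1)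
    (d12 : 8/3 ≤ t1122) (d13 : 8/3 ≤ t1133) (d23 : 8/3 ≤ t2233) :
    (∀ x1 x2 x3 : ℝ, (x1, x2, x3) ≠ (0, 0, 0) →
      0 < t1111 * x1^4 + t2222 * x2^4 + t3333 * x3^4
        + 4 * (t1112 * x1^3 * x2 + t1113 * x1^3 * x3 + t1222 * x1 * x2^3
            + t2223 * x2^3 * x3 + t1333 * x1 * x3^3 + t2333 * x2 * x3^3)
        + 6 * (t1122 * x1^2 * x2^2 + t1133 * x1^2 * x3^2 + t2233 * x2^2 * x3^2)
        + 12 * (t1123 * x1^2 * x2 * x3 + t1223 * x1 * x2^2 * x3 + t1233 * x1 * x2 * x3^2)) :=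
  stmt_7_general t1111 t2222 t3333 t1112 t1113 t1222 t2223 t1333 t2333 t1122 t1133 t2233 t1123 t1223
    t1233 h1111 h2222 h3333 a1112 a1113 a2223 p12 p13 p23 a1123 a1223 a1233 d12 d13 d23
end

section
/- For all real numbers x1, x2, x3, the inequality (x1 + x2 - x3)^4 + 5(x1^2 x2^2 + x1^2 x3^2 + x2^2 x3^2) ≥ 8(x1^3 x2 - x1^3 x3 - x2 x3^3) + 24 x1 x2 x3^2 holds, and equality holds if and only if x1 = x2 = x3. -/
lemma aux_stmt8 (u v w : ℝ) (h : u^2 + v^2 ≠ 0) :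
    0 < 16*(u^2 - u*v + v^2)*w^2 + (4*u^3 - 2*u^2*v + 22*u*v^2 + 4*v^3)*w
        + (u^4 - 4*u^3*v + 11*u^2*v^2 + 4*u*v^3 + v^4) := by
  have hP : 0 < u^2 - u*v + v^2 := by
    rcases lt_trichotomy (u^2 - u*v + v^2) 0 with h1 | h1 | h1
    · nlinarith [sq_nonneg (u-v), sq_nonneg u, sq_nonneg v]
    · exfalso; apply h; nlinarith [sq_nonneg (u-v), sq_nonneg u, sq_nonneg v]
    · exact h1
  have hS : 0 < 48*u^6 - 304*u^5*v + 844*u^4*v^2 - 648*u^3*v^3 + 44*u^2*v^4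
      + 16*u*v^5 + 48*v^6 := by
    rcases eq_or_ne v 0 with rfl | hv
    · have hu : u ≠ 0 := by
        intro hu; apply h; rw [hu]; ring
      have : 0 < u^6 := by positivity
      nlinarith [this]
    · have hv6 : 0 < v^6 := by positivity
      nlinarith [sq_nonneg (u^3 - (19/6)*u^2*v + (5/3)*u*v^2 + (1/4)*v^3),
        sq_nonneg (u^2*v - (31/76)*u*v^2 - (141/608)*v^3),
        sq_nonneg (u*v^2 - (2369/3568)*v^3), hv6]
  nlinarith [sq_nonneg (32*(u^2 - u*v + v^2)*w + (4*u^3 - 2*u^2*v + 22*u*v^2 + 4*v^3)),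
    hS, hP, mul_pos hP hS]

/-- **Corollary 3.2(i).** -/
theorem stmt_8 (x1 x2 x3 : ℝ) :
    8 * (x1^3 * x2 - x1^3 * x3 - x2 * x3^3) + 24 * x1 * x2 * x3^2
      ≤ (x1 + x2 - x3)^4 + 5 * (x1^2 * x2^2 + x1^2 * x3^2 + x2^2 * x3^2) ∧
    ((x1 + x2 - x3)^4 + 5 * (x1^2 * x2^2 + x1^2 * x3^2 + x2^2 * x3^2)
        = 8 * (x1^3 * x2 - x1^3 * x3 - x2 * x3^3) + 24 * x1 * x2 * x3^2 ↔
      (x1 = x2 ∧ x2 = x3)) := by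
  rcases eq_or_ne ((x1 - x3)^2 + (x2 - x3)^2) 0 with h | h
  · have h1 : x1 = x3 := by nlinarith [sq_nonneg (x1 - x3), sq_nonneg (x2 - x3)]
    have h2 : x2 = x3 := by nlinarith [sq_nonneg (x1 - x3), sq_nonneg (x2 - x3)]
    subst h1; subst h2
    refine ⟨le_of_eq (by ring), ⟨fun _ => ⟨rfl, rfl⟩, fun _ => by ring⟩⟩
  · have key := aux_stmt8 (x1 - x3) (x2 - x3) x3 h
    have hlt : 8 * (x1^3 * x2 - x1^3 * x3 - x2 * x3^3) + 24 * x1 * x2 * x3^2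
        < (x1 + x2 - x3)^4 + 5 * (x1^2 * x2^2 + x1^2 * x3^2 + x2^2 * x3^2) := by
      nlinarith [key]
    refine ⟨le_of_lt hlt, ⟨fun heq => absurd heq (by linarith), ?_⟩⟩
    rintro ⟨h12, h23⟩
    exact absurd (by rw [h12, h23]; ring) h
end

section
/- For all real numbers x1, x2, x3 with (x1, x2, x3) ≠ (0, 0, 0), the strict inequality (x1 + x2 + x3)^4 + 10(x1^2 x2^2 + x1^2 x3^2 + x2^2 x3^2) > 8(x1 x3^3 + x1^3 x2 + x2^3 x3) + 24 x1 x2 x3^2 holds. -/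
/-- **Corollary 3.3(ii).** -/
theorem stmt_11 (x1 x2 x3 : ℝ) (h : (x1, x2, x3) ≠ (0, 0, 0)) :
    8 * (x1 * x3^3 + x1^3 * x2 + x2^3 * x3) + 24 * x1 * x2 * x3^2
      < (x1 + x2 + x3)^4 + 10 * (x1^2 * x2^2 + x1^2 * x3^2 + x2^2 * x3^2) := by
  have hpos : 0 < x1^2 + x2^2 + x3^2 := by
    rcases eq_or_ne x1 0 with h1 | h1
    · rcases eq_or_ne x2 0 with h2 | h2
      · rcases eq_or_ne x3 0 with h3 | h3
        · exact absurd (by simp [h1, h2, h3]) h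
        · positivity
      · positivity
    · positivity
  nlinarith [mul_pos hpos hpos,
    sq_nonneg (96*x1^2 - 25*x2^2 - 25*x3^2 - 200*x1*x2 + 200*x1*x3 - 125*x2*x3),
    sq_nonneg (8591*x2^2 - 3025*x3^2 + 14200*x1*x2 + 21800*x1*x3 - 22325*x2*x3),
    sq_nonneg (5566*x3^2 - 7100*x1*x2 - 4825*x1*x3 + 6075*x2*x3),
    sq_nonneg (2374686*x1*x2 + 1891425*x1*x3 + 1831525*x2*x3),
    sq_nonneg (2340070017*x1*x3 - 4764215500*x2*x3),
    sq_nonneg (x2*x3)]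
end

section
/- For all real numbers x1, x2, x3 with (x1, x2, x3) ≠ (0, 0, 0), the strict inequality (x1 + x2 - x3)^4 + 10(x1^2 x2^2 + x1^2 x3^2 + x2^2 x3^2) > 8(x1^3 x2 - x1^3 x3 - x2 x3^3) + 24 x1 x2 x3^2 holds. -/
/-- **Corollary 3.3(iii).** -/
theorem stmt_12 (x1 x2 x3 : ℝ) (h : (x1, x2, x3) ≠ (0, 0, 0)) :
    8 * (x1^3 * x2 - x1^3 * x3 - x2 * x3^3) + 24 * x1 * x2 * x3^2
      < (x1 + x2 - x3)^4 + 10 * (x1^2 * x2^2 + x1^2 * x3^2 + x2^2 * x3^2) := by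
  have hp : 0 < x1^2 + x2^2 + x3^2 := by
    have h' : ¬(x1 = 0 ∧ x2 = 0 ∧ x3 = 0) := by simpa [Prod.ext_iff] using h
    rcases lt_or_eq_of_le (by positivity : (0:ℝ) ≤ x1^2 + x2^2 + x3^2) with hlt | heq
    · exact hlt
    · exact absurd ⟨by nlinarith [sq_nonneg x2, sq_nonneg x3],
        by nlinarith [sq_nonneg x1, sq_nonneg x3],
        by nlinarith [sq_nonneg x1, sq_nonneg x2]⟩ h'
  nlinarith [sq_nonneg (3*x1^2 - 8*x1*x2 + 8*x1*x3), sq_nonneg (3*x2^2 + 8*x1*x2 - 8*x2*x3),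
    sq_nonneg (3*x3^2 - 8*x1*x3 + 8*x2*x3), sq_nonneg (61*x1*x2 - 8*x1*x3 - 8*x2*x3),
    sq_nonneg (53*x1*x3 - 8*x2*x3), sq_nonneg (x2*x3), sq_nonneg (x1^2), sq_nonneg (x2^2),
    sq_nonneg (x3^2), mul_pos hp hp]
end

section
/- For all real numbers x1, x2, x3 with (x1, x2, x3) ≠ (0, 0, 0), the strict inequality (x1 + x2 - x3)^4 + 6(x1^2 x2^2 + x1^2 x3^2 + x2^2 x3^2) > 8(x1 x2^3 - x1 x3^3 - x2^3 x3) + 24 x1 x2 x3^2 holds (this is the inequality of Corollary 3.2(ii) with x1^3 x2 and x1 x2^3, x1^3 x3 and x1 x3^3, x2 x3^3 and x2^3 x3 simultaneously exchanged). -/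
/-!
The difference of the two sides is the sum of squares
`Σ_cyc (x₁² + 2x₁x₂ - 2x₁x₃)² + 2 Σ_cyc (x₁x₂ - x₂x₃)²`.
The three polynomials `x₁² + 2x₁x₂ - 2x₁x₃`, `x₂² + 2x₂x₃ - 2x₂x₁`, `x₃² + 2x₃x₁ - 2x₃x₂` add up to
`x₁² + x₂² + x₃²`, so by Cauchy–Schwarz the difference is at least `(x₁² + x₂² + x₃²)² / 3`.
-/

section

variable {R : Type*}

theorem quartic_sub_eq_sum_sq [CommRing R] (x1 x2 x3 : R) :
    (x1 + x2 - x3)^4 + 6 * (x1^2 * x2^2 + x1^2 * x3^2 + x2^2 * x3^2)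
        - (8 * (x1 * x2^3 - x1 * x3^3 - x2^3 * x3) + 24 * x1 * x2 * x3^2)
      = (x1^2 + 2 * x1 * x2 - 2 * x1 * x3)^2 + (x2^2 + 2 * x2 * x3 - 2 * x2 * x1)^2
          + (x3^2 + 2 * x3 * x1 - 2 * x3 * x2)^2
        + 2 * ((x1 * x2 - x2 * x3)^2 + (x2 * x3 - x3 * x1)^2 + (x3 * x1 - x1 * x2)^2) := by
  ring

theorem sq_add_add_le_three_mul [CommRing R] [LinearOrder R] [IsStrictOrderedRing R]
    (a b c : R) : (a + b + c)^2 ≤ 3 * (a^2 + b^2 + c^2) := by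
  nlinarith [sq_nonneg (a - b), sq_nonneg (b - c), sq_nonneg (c - a)]

theorem sq_sum_sq_le_three_mul_quartic_sub [CommRing R] [LinearOrder R] [IsStrictOrderedRing R]
    (x1 x2 x3 : R) :
    (x1^2 + x2^2 + x3^2)^2 ≤ 3 * ((x1 + x2 - x3)^4 + 6 * (x1^2 * x2^2 + x1^2 * x3^2 + x2^2 * x3^2)
        - (8 * (x1 * x2^3 - x1 * x3^3 - x2^3 * x3) + 24 * x1 * x2 * x3^2)) := by
  have hsum : x1^2 + x2^2 + x3^2 = (x1^2 + 2 * x1 * x2 - 2 * x1 * x3)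
      + (x2^2 + 2 * x2 * x3 - 2 * x2 * x1) + (x3^2 + 2 * x3 * x1 - 2 * x3 * x2) := by
    ring
  rw [quartic_sub_eq_sum_sq, hsum]
  linarith [sq_add_add_le_three_mul (x1^2 + 2 * x1 * x2 - 2 * x1 * x3)
    (x2^2 + 2 * x2 * x3 - 2 * x2 * x1) (x3^2 + 2 * x3 * x1 - 2 * x3 * x2),
    sq_nonneg (x1 * x2 - x2 * x3), sq_nonneg (x2 * x3 - x3 * x1), sq_nonneg (x3 * x1 - x1 * x2)]

theorem sum_sq_pos_of_ne_zero [CommRing R] [LinearOrder R] [IsStrictOrderedRing R]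
    {x1 x2 x3 : R} (h : (x1, x2, x3) ≠ (0, 0, 0)) : 0 < x1^2 + x2^2 + x3^2 := by
  simp only [ne_eq, Prod.mk.injEq, not_and_or] at h
  rcases h with h | h | h <;> positivity

end

/-- **Corollary 3.2(ii), exchanged version.** -/
theorem stmt_15 (x1 x2 x3 : ℝ) (h : (x1, x2, x3) ≠ (0, 0, 0)) :
    8 * (x1 * x2^3 - x1 * x3^3 - x2^3 * x3) + 24 * x1 * x2 * x3^2
      < (x1 + x2 - x3)^4 + 6 * (x1^2 * x2^2 + x1^2 * x3^2 + x2^2 * x3^2) := by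
  have hpos := pow_pos (sum_sq_pos_of_ne_zero h) 2
  linarith [sq_sum_sq_le_three_mul_quartic_sub x1 x2 x3]
end

section
/- For all real numbers x1, x2, x3 with (x1, x2, x3) ≠ (0, 0, 0), the strict inequality (x1 + x2 + x3)^4 + 10(x1^2 x2^2 + x1^2 x3^2 + x2^2 x3^2) > 8(x1^3 x3 + x1^3 x2 + x2^3 x3) + 24 x1 x2 x3^2 holds (this is the inequality of Corollary 3.3(ii) with x1 x3^3 and x1^3 x3 exchanged). -/
/-- **Corollary 3.3(ii), with `x1 x3^3` and `x1^3 x3` exchanged.** -/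
theorem stmt_17 (x1 x2 x3 : ℝ) (h : (x1, x2, x3) ≠ (0, 0, 0)) :
    8 * (x1^3 * x3 + x1^3 * x2 + x2^3 * x3) + 24 * x1 * x2 * x3^2
      < (x1 + x2 + x3)^4 + 10 * (x1^2 * x2^2 + x1^2 * x3^2 + x2^2 * x3^2) := by
  have hs : (0:ℝ) < x1^2 + x2^2 + x3^2 := by
    rcases lt_or_eq_of_le (by positivity : (0:ℝ) ≤ x1^2 + x2^2 + x3^2) with h' | h'
    · exact h'
    · exfalso; apply h
      have h1 : x1 = 0 := by nlinarith [sq_nonneg x1, sq_nonneg x2, sq_nonneg x3]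
      have h2 : x2 = 0 := by nlinarith [sq_nonneg x1, sq_nonneg x2, sq_nonneg x3]
      have h3 : x3 = 0 := by nlinarith [sq_nonneg x1, sq_nonneg x2, sq_nonneg x3]
      simp [h1, h2, h3]
  nlinarith [mul_pos hs hs,
    sq_nonneg (98*x1^2 - 55*x2^2 + 20*x3^2 - 200*x1*x2 - 200*x1*x3 + 204*x2*x3),
    sq_nonneg (6579*x2^2 + 2668*x3^2 + 8600*x1*x2 + 22908*x1*x3 - 8380*x2*x3),
    sq_nonneg (545254*x3^2 - 116917*x1*x2 + 960672*x1*x3 + 1270040*x2*x3),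
    sq_nonneg (643025433*x1*x2 - 156168760*x1*x3 + 449015836*x2*x3),
    sq_nonneg (4547833820*x1*x3 - 1961075681*x2*x3),
    sq_nonneg (x2*x3)]
end
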